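/- Let t ≥ 1 be an integer and let G be a finite simple graph on n ≥ 2 vertices whose maximum degree Δ satisfies C(t+1,2) + 1 ≤ Δ ≤ C(t+2,2), where C(m,2) = m(m−1)/2 denotes a binomial coefficient. Then f(G) ≤ t. -/

import Mathlib

open Finset

variable {V : Type*}

open scoped Classical in
/-- Degree of `v` in the subgraph of `G` induced on the vertex set `A`
(number of neighbours of `v` inside `A`). -/
noncomputable def degOn (G : SimpleGraph V) (A : Finset V) (v : V) : ℕ :=
  (A.filter fun w => G.Adj v w).card

/-- Maximum degree of the subgraph of `G` induced on `A`. -/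
noncomputable def maxDegOn (G : SimpleGraph V) (A : Finset V) : ℕ :=
  A.sup (degOn G A)

open scoped Classical in
/-- The subgraph of `G` induced on `A` has fewer than `k` vertices or at least `k`
vertices realising its maximum degree. -/
def equates (G : SimpleGraph V) (k : ℕ) (A : Finset V) : Prop :=
  A.card < k ∨ k ≤ (A.filter fun v => degOn G A v = maxDegOn G A).card

open scoped Classical in
/-- `f_k` of the subgraph of `G` induced on `A`: the minimum number of vertices of `A`
whose deletion leaves an induced subgraph with fewer than `k` vertices or with at
least `k` vertices realising its maximum degree. -/
noncomputable def fkOn (G : SimpleGraph V) (k : ℕ) (A : Finset V) : ℕ :=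
  sInf {m | ∃ S, S ⊆ A ∧ S.card = m ∧ equates G k (A \ S)}

/-- `f_k(G)`. -/
noncomputable def fk [Fintype V] (G : SimpleGraph V) (k : ℕ) : ℕ :=
  fkOn G k Finset.univ

/-- `diff` of the subgraph of `G` induced on `A`: the largest degree minus the
second-largest degree (with multiplicity) of this subgraph. -/
noncomputable def diffOn (G : SimpleGraph V) (A : Finset V) : ℕ :=
  maxDegOn G A - ((A.val.map (degOn G A)).erase (maxDegOn G A)).sup

/-- `diff(G) = d₁ - d₂`, the difference between the largest and second-largest
vertex degrees of `G`. -/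
noncomputable def diffDeg [Fintype V] (G : SimpleGraph V) : ℕ :=
  diffOn G Finset.univ

/-!
Induction on `t`. Let `v` be a vertex of maximum degree `D` and `u` a vertex of largest degree
`d₂` among the others. At most `d₂` neighbours of `v` lie in `N(u) ∪ {u}`, so if
`D - d₂ ≤ t + 1` one can delete `D - d₂` neighbours of `v` outside `N(u) ∪ {u}`: afterwards
`u` and `v` both have degree `d₂`, which is the new maximum. Otherwise, since
`C(t + 3, 2) = C(t + 2, 2) + t + 2`, the graph without `v` has maximum degree at most
`d₂ ≤ C(t + 2, 2)`, and deleting `v` costs one vertex on top of the induction hypothesis.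
At `t = 0` the maximum degree is at most `1`, and a vertex of degree `1` together with its
neighbour already realise it.
-/

theorem Finset.exists_max_and_second_max {α β : Type*} [DecidableEq α] [LinearOrder β]
    (f : α → β) {A : Finset α} (hA : 2 ≤ A.card) :
    ∃ v ∈ A, ∃ u ∈ A, u ≠ v ∧ (∀ x ∈ A, f x ≤ f v) ∧ ∀ x ∈ A, x ≠ v → f x ≤ f u := by
  obtain ⟨v, hv, hv_max⟩ := A.exists_max_image f (card_pos.mp (by omega))
  have hne : (A.erase v).Nonempty := card_pos.mp (by rw [card_erase_of_mem hv]; omega)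
  obtain ⟨u, hu, hu_max⟩ := (A.erase v).exists_max_image f hne
  exact ⟨v, hv, u, mem_of_mem_erase hu, ne_of_mem_erase hu, hv_max,
    fun x hx hxv => hu_max x (mem_erase.mpr ⟨hxv, hx⟩)⟩

open scoped Classical in
noncomputable def nbhdOn (G : SimpleGraph V) (A : Finset V) (v : V) : Finset V :=
  A.filter (G.Adj v)

section

open scoped Classical

variable (G : SimpleGraph V)

theorem degOn_eq_card_nbhdOn (A : Finset V) (v : V) : degOn G A v = (nbhdOn G A v).card := rfl

theorem nbhdOn_sdiff (A S : Finset V) (v : V) : nbhdOn G (A \ S) v = nbhdOn G A v \ S := by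
  ext x
  simp only [nbhdOn, mem_filter, mem_sdiff]
  tauto

theorem notMem_nbhdOn_self (A : Finset V) (v : V) : v ∉ nbhdOn G A v := by
  simp [nbhdOn]

theorem mem_nbhdOn_comm {A : Finset V} {u v : V} (hu : u ∈ A) (hv : v ∈ A) :
    u ∈ nbhdOn G A v ↔ v ∈ nbhdOn G A u := by
  simp only [nbhdOn, mem_filter, hu, hv, true_and, G.adj_comm]

theorem degOn_mono {A B : Finset V} (h : A ⊆ B) (v : V) : degOn G A v ≤ degOn G B v :=
  card_le_card (filter_subset_filter _ h)

theorem maxDegOn_le {A : Finset V} {d : ℕ} (h : ∀ x ∈ A, degOn G A x ≤ d) : maxDegOn G A ≤ d :=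
  Finset.sup_le h

theorem maxDegOn_eq_of_forall_le {A : Finset V} {v : V} (hv : v ∈ A)
    (h : ∀ x ∈ A, degOn G A x ≤ degOn G A v) : maxDegOn G A = degOn G A v :=
  le_antisymm (maxDegOn_le G h) (le_sup hv)

theorem equates_empty (k : ℕ) : equates G k ∅ := by
  rcases k with _ | k
  · exact Or.inr (Nat.zero_le _)
  · exact Or.inl (by simp)

theorem equates_two_of_ne {A : Finset V} {u v : V} (hu : u ∈ A) (hv : v ∈ A) (huv : u ≠ v)
    (hdeg : degOn G A u = degOn G A v) (hmax : ∀ x ∈ A, degOn G A x ≤ degOn G A v) :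
    equates G 2 A := by
  right
  rw [maxDegOn_eq_of_forall_le G hv hmax]
  exact one_lt_card_iff.mpr ⟨u, v, mem_filter.mpr ⟨hu, hdeg⟩, mem_filter.mpr ⟨hv, rfl⟩, huv⟩

theorem equates_two_of_maxDegOn_le_one {A : Finset V} (h : maxDegOn G A ≤ 1) :
    equates G 2 A := by
  rcases lt_or_ge A.card 2 with hA | hA
  · exact Or.inl hA
  obtain ⟨v, hv, u, hu, huv, hv_max, -⟩ := exists_max_and_second_max (degOn G A) hA
  have hv_le : degOn G A v ≤ 1 := (le_sup hv).trans h
  rcases Nat.le_one_iff_eq_zero_or_eq_one.mp hv_le with hv0 | hv1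
  · exact equates_two_of_ne G hu hv huv (by have := hv_max u hu; omega) hv_max
  · obtain ⟨w, hw⟩ := card_pos.mp (show 0 < (nbhdOn G A v).card by
      rw [← degOn_eq_card_nbhdOn]; omega)
    have hwA : w ∈ A := mem_of_mem_filter w hw
    have hw1 : 1 ≤ degOn G A w :=
      card_pos.mpr ⟨v, (mem_nbhdOn_comm G hwA hv).mp hw⟩
    have hwv : w ≠ v := fun h => notMem_nbhdOn_self G A v (h ▸ hw)
    exact equates_two_of_ne G hwA hv hwv (by have := hv_max w hwA; omega) hv_max

theorem fkOn_le_card {k : ℕ} {A S : Finset V} (hS : S ⊆ A) (h : equates G k (A \ S)) :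
    fkOn G k A ≤ S.card :=
  Nat.sInf_le ⟨S, hS, rfl, h⟩

theorem fkOn_eq_zero {k : ℕ} {A : Finset V} (h : equates G k A) : fkOn G k A = 0 :=
  Nat.le_zero.mp (fkOn_le_card G (empty_subset A) (by rwa [sdiff_empty]))

theorem exists_card_eq_fkOn (k : ℕ) (A : Finset V) :
    ∃ S ⊆ A, S.card = fkOn G k A ∧ equates G k (A \ S) :=
  Nat.sInf_mem (⟨A.card, A, Subset.rfl, rfl, by rw [Finset.sdiff_self]; exact equates_empty G k⟩ :
    {m | ∃ S, S ⊆ A ∧ S.card = m ∧ equates G k (A \ S)}.Nonempty)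

theorem fkOn_le_fkOn_erase_add_one (k : ℕ) {A : Finset V} {v : V} (hv : v ∈ A) :
    fkOn G k A ≤ fkOn G k (A.erase v) + 1 := by
  obtain ⟨S, hSA, hS, hequates⟩ := exists_card_eq_fkOn G k (A.erase v)
  have hsub : insert v S ⊆ A := insert_subset hv (hSA.trans (erase_subset v A))
  calc fkOn G k A ≤ (insert v S).card :=
        fkOn_le_card G hsub (by rwa [sdiff_insert, ← erase_sdiff_comm])
    _ ≤ S.card + 1 := card_insert_le v S
    _ = fkOn G k (A.erase v) + 1 := by rw [hS]

theorem card_nbhdOn_inter_insert_le {A : Finset V} {u v : V} (hv : v ∈ A) :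
    (nbhdOn G A v ∩ insert u (nbhdOn G A u)).card ≤ degOn G A u := by
  by_cases hvu : u ∈ nbhdOn G A v
  · have huA : u ∈ A := mem_of_mem_filter u hvu
    have hv_Nu : v ∈ nbhdOn G A u := (mem_nbhdOn_comm G huA hv).mp hvu
    have hsub : nbhdOn G A v ∩ insert u (nbhdOn G A u) ⊆ insert u ((nbhdOn G A u).erase v) := by
      intro x hx
      obtain ⟨hxv, hx⟩ := mem_inter.mp hx
      have hx_ne : x ≠ v := fun h => notMem_nbhdOn_self G A v (h ▸ hxv)
      rcases mem_insert.mp hx with rfl | hx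
      · exact mem_insert_self x _
      · exact mem_insert_of_mem (mem_erase.mpr ⟨hx_ne, hx⟩)
    calc _ ≤ (insert u ((nbhdOn G A u).erase v)).card := card_le_card hsub
      _ ≤ ((nbhdOn G A u).erase v).card + 1 := card_insert_le _ _
      _ = degOn G A u := by
        rw [card_erase_of_mem hv_Nu, degOn_eq_card_nbhdOn]
        have := card_pos.mpr ⟨v, hv_Nu⟩
        omega
  · have hsub : nbhdOn G A v ∩ insert u (nbhdOn G A u) ⊆ nbhdOn G A u := by
      intro x hx
      obtain ⟨hxv, hx⟩ := mem_inter.mp hx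
      rcases mem_insert.mp hx with rfl | hx
      · exact absurd hxv hvu
      · exact hx
    exact card_le_card hsub

theorem fkOn_two_le_degOn_sub {A : Finset V} {u v : V} (hu : u ∈ A) (hv : v ∈ A) (huv : u ≠ v)
    (hu_le : degOn G A u ≤ degOn G A v)
    (hu_max : ∀ x ∈ A, x ≠ v → degOn G A x ≤ degOn G A u) :
    fkOn G 2 A ≤ degOn G A v - degOn G A u := by
  have hE : degOn G A v - degOn G A u ≤ (nbhdOn G A v \ insert u (nbhdOn G A u)).card := by
    have := card_sdiff_add_card_inter (nbhdOn G A v) (insert u (nbhdOn G A u))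
    have := card_nbhdOn_inter_insert_le G hv (u := u)
    rw [degOn_eq_card_nbhdOn G A v]
    omega
  obtain ⟨S, hSE, hS⟩ := exists_subset_card_eq hE
  have hS_Nv : S ⊆ nbhdOn G A v := hSE.trans sdiff_subset
  have hS_Nu : Disjoint S (insert u (nbhdOn G A u)) := disjoint_of_subset_left hSE sdiff_disjoint
  have hdeg_v : degOn G (A \ S) v = degOn G A u := by
    rw [degOn_eq_card_nbhdOn, nbhdOn_sdiff, card_sdiff_of_subset hS_Nv, hS,
      ← degOn_eq_card_nbhdOn]
    omega
  have hdeg_u : degOn G (A \ S) u = degOn G A u := by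
    rw [degOn_eq_card_nbhdOn, nbhdOn_sdiff,
      sdiff_eq_self_of_disjoint (disjoint_of_subset_right (subset_insert _ _) hS_Nu).symm]
    rfl
  have hvS : v ∈ A \ S := mem_sdiff.mpr ⟨hv, fun h => notMem_nbhdOn_self G A v (hS_Nv h)⟩
  have huS : u ∈ A \ S := mem_sdiff.mpr ⟨hu, disjoint_right.mp hS_Nu (mem_insert_self u _)⟩
  have hmax : ∀ x ∈ A \ S, degOn G (A \ S) x ≤ degOn G (A \ S) v := by
    intro x hx
    rcases eq_or_ne x v with rfl | hxv
    · exact le_rfl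
    · rw [hdeg_v]
      exact (degOn_mono G sdiff_subset x).trans (hu_max x (mem_sdiff.mp hx).1 hxv)
  calc fkOn G 2 A ≤ S.card :=
        fkOn_le_card G (hS_Nv.trans (filter_subset _ _))
          (equates_two_of_ne G huS hvS huv (hdeg_u.trans hdeg_v.symm) hmax)
    _ = degOn G A v - degOn G A u := hS

theorem fkOn_two_le_of_maxDegOn_le_choose (t : ℕ) {A : Finset V}
    (h : maxDegOn G A ≤ (t + 2).choose 2) : fkOn G 2 A ≤ t := by
  induction t generalizing A with
  | zero => exact (fkOn_eq_zero G (equates_two_of_maxDegOn_le_one G (by simpa using h))).le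
  | succ t ih =>
    rcases lt_or_ge A.card 2 with hA | hA
    · exact (fkOn_eq_zero G (Or.inl hA)).trans_le (Nat.zero_le _)
    obtain ⟨v, hv, u, hu, huv, hv_max, hu_max⟩ := exists_max_and_second_max (degOn G A) hA
    have hD : degOn G A v ≤ (t + 2).choose 2 + (t + 2) := by
      have hchoose : (t + 1 + 2).choose 2 = (t + 2).choose 2 + (t + 2) := by
        rw [Nat.choose_succ_succ', Nat.choose_one_right, add_comm]
      rwa [maxDegOn_eq_of_forall_le G hv hv_max, hchoose] at h
    rcases le_or_gt (degOn G A v - degOn G A u) (t + 1) with hdiff | hdiff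
    · exact (fkOn_two_le_degOn_sub G hu hv huv (hv_max u hu) hu_max).trans hdiff
    · have hB : maxDegOn G (A.erase v) ≤ (t + 2).choose 2 := by
        refine maxDegOn_le G fun x hx => ?_
        have := hu_max x (mem_of_mem_erase hx) (ne_of_mem_erase hx)
        have := degOn_mono G (erase_subset v A) x
        omega
      exact (fkOn_le_fkOn_erase_add_one G 2 hv).trans (Nat.succ_le_succ (ih hB))

end

theorem stmt4_general {V : Type*} [Fintype V] (G : SimpleGraph V) (t : ℕ)
    (hhi : maxDegOn G Finset.univ ≤ Nat.choose (t + 2) 2) :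
    fk G 2 ≤ t :=
  fkOn_two_le_of_maxDegOn_le_choose G t hhi

/-- If `t ≥ 1` and `G` is a graph on `n ≥ 2` vertices whose maximum
degree `Δ` satisfies `C(t+1,2) + 1 ≤ Δ ≤ C(t+2,2)`, then `f(G) ≤ t`. -/
theorem stmt4 {V : Type*} [Fintype V] (G : SimpleGraph V) (t : ℕ) (ht : 1 ≤ t)
    (hn : 2 ≤ Fintype.card V)
    (hlo : Nat.choose (t + 1) 2 + 1 ≤ maxDegOn G Finset.univ)
    (hhi : maxDegOn G Finset.univ ≤ Nat.choose (t + 2) 2) :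
    fk G 2 ≤ t :=
  stmt4_general G t hhi
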